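/- Let k ≥ 1, a ≥ 1, b ≥ 0 and c ≥ 1 be integers, and let p be any prime. Then the positive integer p^{v_p(c·L_k)} · ∏_q q, where the product ranges over all primes q such that q | c·L_k, q ∤ a and p | (q − 1), is a period of the function g_{p,k,φ}. -/

import Mathlib

/-!
Write `m_i = b + a n + a c i`. Since `φ` is multiplicative and `v_q (lcm m_i) = max_i v_q (m_i)`,
`v_p (g_{k,φ} (n))` is a sum over primes `q` of `∑_i w (v_q m_i) - w (max_i v_q m_i)`, where
`w e = v_p (φ (q ^ e))`. Shifting `n` by the period `T` shifts every `m_i` by `a T`, and each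
summand survives:
* `q = p`: `w e = e - 1`. Two terms of the progression differ by `a c j` with `j ≤ k`, so at most
  one `m_i` has `v_p (m_i) > M := v_p (a c L_k)`; hence only the truncations `min (v_p m_i) M` matter,
  and they are unchanged because `p ^ M ∣ a T`.
* `q ≠ p`: `w e` only records whether `e = 0`. If `q ∣ a T` the divisibility pattern is unchanged;
  otherwise either `p ∤ q - 1`, so `w = 0`, or `q ∤ a c L_k`, so `q` divides at most one `m_i`.
-/

/-- `L k = lcm (1, 2, …, k)`. -/
def Lk (k : ℕ) : ℕ := (Finset.Icc 1 k).lcm id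

/-- `g_{k,φ} (n) = (∏_{i=0}^{k} φ (b + a (n + i c))) / φ (lcm_{0 ≤ i ≤ k} (b + a (n + i c)))`. -/
def gkphi (k a b c n : ℕ) : ℚ :=
  (∏ i ∈ Finset.range (k + 1), ((b + a * (n + i * c)).totient : ℚ)) /
    (((Finset.range (k + 1)).lcm fun i => b + a * (n + i * c)).totient : ℚ)

open Finset Nat

/-- With `w e = v_p (φ (q ^ e))` and `e i = v_q (m i)`, this is the contribution of the prime `q`
to `v_p (∏ i ∈ s, φ (m i) / φ (lcm_{i ∈ s} m i))`. -/
def lcmDefect {ι : Type*} (s : Finset ι) (w : ℕ → ℕ) (e : ι → ℕ) : ℤ :=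
  ∑ i ∈ s, (w (e i) : ℤ) - w (s.sup e)

section lcmDefect

variable {ι : Type*} {s : Finset ι} {w : ℕ → ℕ} {e : ι → ℕ} {M : ℕ}

theorem lcmDefect_eq_truncate_of_subsingleton
    (he : ∀ i ∈ s, ∀ j ∈ s, M < e i → M < e j → i = j) :
    lcmDefect s w e = lcmDefect s w fun i => min (e i) M := by
  by_cases hle : ∀ i ∈ s, e i ≤ M
  · have hmin : ∀ i ∈ s, min (e i) M = e i := fun i hi => min_eq_left (hle i hi)
    simp only [lcmDefect, sup_congr rfl hmin]
    exact congrArg (· - _) (sum_congr rfl fun i hi => by rw [hmin i hi])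
  classical
  push Not at hle
  obtain ⟨i₀, hi₀, hlt⟩ := hle
  have hrest : ∀ j ∈ s.erase i₀, e j ≤ M := fun j hj => by
    by_contra! h
    exact (ne_of_mem_erase hj) (he j (mem_of_mem_erase hj) i₀ hi₀ h hlt)
  have hsup : s.sup e = e i₀ := le_antisymm
    (Finset.sup_le fun j hj => by
      rcases eq_or_ne j i₀ with rfl | hne
      · rfl
      · exact (hrest j (mem_erase.2 ⟨hne, hj⟩)).trans hlt.le)
    (le_sup hi₀)
  have hsup' : (s.sup fun i => min (e i) M) = M :=
    le_antisymm (Finset.sup_le fun _ _ => min_le_right _ _)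
      (by simpa [min_eq_right hlt.le] using le_sup (f := fun i => min (e i) M) hi₀)
  simp only [lcmDefect]
  rw [← add_sum_erase s _ hi₀, ← add_sum_erase s _ hi₀, hsup, hsup', min_eq_right hlt.le,
    sum_congr rfl fun j hj => congrArg (fun x => (w x : ℤ)) (min_eq_left (hrest j hj))]
  ring

theorem lcmDefect_eq_truncate_of_comp_min (hw : ∀ x, w (min x M) = w x) :
    lcmDefect s w e = lcmDefect s w fun i => min (e i) M := by
  simp only [lcmDefect, hw]
  rw [← hw (s.sup e), sup_inf_distrib_right]

end lcmDefect

theorem Nat.factorization_totient_eq_sum {m : ℕ} (hm : m ≠ 0) {P : Finset ℕ}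
    (hP : m.primeFactors ⊆ P) (p : ℕ) :
    (φ m).factorization p = ∑ q ∈ P, (φ (q ^ m.factorization q)).factorization p := by
  have hpow : ∀ q, q ^ m.factorization q ≠ 0 := fun q => by
    rcases eq_or_ne q 0 with rfl | hq
    · simp
    · exact pow_ne_zero _ hq
  rw [multiplicative_factorization φ (fun _ _ => totient_mul) totient_one hm,
    Finsupp.prod_of_support_subset _ (by simpa using hP) _ (by simp),
    factorization_prod fun q _ => (totient_pos.2 (pos_of_ne_zero (hpow q))).ne',
    Finset.sum_apply']

theorem Nat.factorization_totient_prime_pow {q : ℕ} (hq : q.Prime) (e p : ℕ) :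
    (φ (q ^ e)).factorization p =
      if e = 0 then 0 else (e - 1) * q.factorization p + (q - 1).factorization p := by
  rcases eq_or_ne e 0 with rfl | he
  · simp
  rw [if_neg he, totient_prime_pow hq (pos_of_ne_zero he),
    factorization_mul (pow_ne_zero _ hq.ne_zero) (by have := hq.two_le; omega),
    factorization_pow]
  rfl

theorem padicValRat_prod_totient_div_totient_lcm {p : ℕ} [Fact p.Prime] {ι : Type*}
    {s : Finset ι} {m : ι → ℕ} (hm : ∀ i ∈ s, m i ≠ 0) {P : Finset ℕ}
    (hP : (s.lcm m).primeFactors ⊆ P) :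
    padicValRat p ((∏ i ∈ s, (φ (m i) : ℚ)) / φ (s.lcm m)) =
      ∑ q ∈ P, lcmDefect s (fun e => (φ (q ^ e)).factorization p)
        fun i => (m i).factorization q := by
  have hL : s.lcm m ≠ 0 := lcm_eq_zero_iff.not.2 fun ⟨i, hi, h⟩ => hm i hi h
  have hφ : ∀ i ∈ s, φ (m i) ≠ 0 := fun i hi => (totient_pos.2 (pos_of_ne_zero (hm i hi))).ne'
  rw [← Nat.cast_prod, padicValRat.div (Nat.cast_ne_zero.2 (prod_ne_zero_iff.2 hφ))
      (Nat.cast_ne_zero.2 (totient_pos.2 (pos_of_ne_zero hL)).ne'),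
    padicValRat.of_nat, padicValRat.of_nat, ← factorization_def _ Fact.out,
    ← factorization_def _ Fact.out, factorization_prod hφ, Finset.sum_apply',
    sum_congr rfl fun i hi => factorization_totient_eq_sum (hm i hi)
      ((primeFactors_mono (dvd_lcm hi) hL).trans hP) p,
    factorization_totient_eq_sum hL hP, sum_comm]
  simp only [lcmDefect, Finset.factorization_lcm hm, sum_sub_distrib, Nat.cast_sum]

theorem gkphi_eq_add_mul (k a b c n : ℕ) :
    gkphi k a b c n = (∏ i ∈ range (k + 1), (φ (b + a * n + a * c * i) : ℚ)) /
      φ ((range (k + 1)).lcm fun i => b + a * n + a * c * i) := by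
  have h : ∀ i, b + a * (n + i * c) = b + a * n + a * c * i := fun i => by ring
  simp only [gkphi, h]

theorem Lk_ne_zero (k : ℕ) : Lk k ≠ 0 :=
  lcm_eq_zero_iff.not.2 fun ⟨i, hi, h⟩ => by simp_all

theorem dvd_Lk {l k : ℕ} (hl : 0 < l) (hlk : l ≤ k) : l ∣ Lk k :=
  dvd_lcm (s := Icc 1 k) (f := id) (mem_Icc.2 ⟨hl, hlk⟩)

theorem eq_of_dvd_add_mul_of_dvd_add_mul {r x d k i j : ℕ} (hr : ¬ r ∣ d * Lk k)
    (hi : i ≤ k) (hj : j ≤ k) (hri : r ∣ x + d * i) (hrj : r ∣ x + d * j) : i = j := by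
  wlog hij : i ≤ j generalizing i j
  · exact (this hj hi hrj hri (le_of_not_ge hij)).symm
  by_contra hne
  have hdiff : x + d * j - (x + d * i) = d * (j - i) := by rw [Nat.mul_sub]; omega
  have hr' : r ∣ d * (j - i) := hdiff ▸ Nat.dvd_sub hrj hri
  exact hr (hr'.trans (mul_dvd_mul_left d (dvd_Lk (by omega) (by omega))))

theorem min_factorization_add_eq {p x t M : ℕ} (hp : p.Prime) (hx : x ≠ 0) (ht : p ^ M ∣ t) :
    min ((x + t).factorization p) M = min (x.factorization p) M := by
  have hxt : x + t ≠ 0 := by omega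
  have hdvd : ∀ j ≤ M, p ^ j ∣ x + t ↔ p ^ j ∣ x := fun j hj =>
    Nat.dvd_add_left ((pow_dvd_pow p hj).trans ht)
  apply le_antisymm <;> refine le_min ?_ (min_le_right _ _)
  · exact (hp.pow_dvd_iff_le_factorization hx).1 ((hdvd _ (min_le_right _ _)).1
      ((hp.pow_dvd_iff_le_factorization hxt).2 (min_le_left _ _)))
  · exact (hp.pow_dvd_iff_le_factorization hxt).1 ((hdvd _ (min_le_right _ _)).2
      ((hp.pow_dvd_iff_le_factorization hx).2 (min_le_left _ _)))

theorem lcmDefect_add_mul_eq_truncate {q x d k M : ℕ} {w : ℕ → ℕ} (hq : q.Prime) (hx : x ≠ 0)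
    (hqd : ¬ q ^ (M + 1) ∣ d * Lk k) :
    lcmDefect (range (k + 1)) w (fun i => (x + d * i).factorization q) =
      lcmDefect (range (k + 1)) w fun i => min ((x + d * i).factorization q) M := by
  refine lcmDefect_eq_truncate_of_subsingleton fun i hi j hj hMi hMj => ?_
  rw [mem_range, Nat.lt_succ_iff] at hi hj
  exact eq_of_dvd_add_mul_of_dvd_add_mul hqd hi hj
    ((hq.pow_dvd_iff_le_factorization (by omega)).2 hMi)
    ((hq.pow_dvd_iff_le_factorization (by omega)).2 hMj)

theorem lcmDefect_totient_progression_shift {p q x d t k : ℕ} (hq : q.Prime)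
    (hx : x ≠ 0) (hd : d ≠ 0) (hpt : p ^ (d * Lk k).factorization p ∣ t)
    (hqt : q ≠ p → p ∣ q - 1 → ¬ q ∣ t → ¬ q ∣ d * Lk k) :
    lcmDefect (range (k + 1)) (fun e => (φ (q ^ e)).factorization p)
        (fun i => (x + t + d * i).factorization q) =
      lcmDefect (range (k + 1)) (fun e => (φ (q ^ e)).factorization p)
        fun i => (x + d * i).factorization q := by
  set w := fun e => (φ (q ^ e)).factorization p with hw
  obtain ⟨M, hMt, htrunc⟩ : ∃ M, q ^ M ∣ t ∧ ∀ y ≠ 0,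
      lcmDefect (range (k + 1)) w (fun i => (y + d * i).factorization q) =
        lcmDefect (range (k + 1)) w fun i => min ((y + d * i).factorization q) M := by
    rcases eq_or_ne q p with rfl | hqp
    · exact ⟨_, hpt, fun y hy => lcmDefect_add_mul_eq_truncate hq hy
        (pow_succ_factorization_not_dvd (mul_ne_zero hd (Lk_ne_zero k)) hq)⟩
    have hwq : ∀ e, w e = if e = 0 then 0 else (q - 1).factorization p := fun e => by
      simp [hw, factorization_totient_prime_pow hq, hq.factorization, hqp]
    by_cases hqt' : q ∣ t
    · refine ⟨1, by simpa using hqt', fun y _ => lcmDefect_eq_truncate_of_comp_min fun e => ?_⟩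
      simp only [hwq]
      split_ifs <;> omega
    by_cases hpq : p ∣ q - 1
    · exact ⟨0, by simp, fun y hy =>
        lcmDefect_add_mul_eq_truncate hq hy (by simpa using hqt hqp hpq hqt')⟩
    · exact ⟨0, by simp, fun y _ => lcmDefect_eq_truncate_of_comp_min fun e => by
        simp [hwq, factorization_eq_zero_of_not_dvd hpq]⟩
  rw [htrunc _ (by omega), htrunc _ hx]
  exact congrArg (lcmDefect _ w) (funext fun i => by
    rw [add_right_comm]; exact min_factorization_add_eq hq (by omega) hMt)

theorem period_of_local_gkphi_general (k a b c : ℕ)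
    (ha : 1 ≤ a) (hc : 1 ≤ c)
    (p : ℕ) (hp : p.Prime) :
    ∀ n : ℕ, 0 < n →
      padicValRat p (gkphi k a b c
        (n + p ^ padicValNat p (c * Lk k) *
          ∏ q ∈ (c * Lk k).divisors.filter
            (fun q => q.Prime ∧ ¬ q ∣ a ∧ p ∣ (q - 1)), q)) =
      padicValRat p (gkphi k a b c n) := by
  have := Fact.mk hp
  intro n hn
  set T := p ^ padicValNat p (c * Lk k) *
    ∏ q ∈ (c * Lk k).divisors.filter (fun q => q.Prime ∧ ¬ q ∣ a ∧ p ∣ (q - 1)), q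
  have hcL : c * Lk k ≠ 0 := mul_ne_zero (by omega) (Lk_ne_zero k)
  have hpT : p ^ (a * c * Lk k).factorization p ∣ a * T := by
    rw [mul_assoc, Nat.factorization_mul (by omega) hcL, Finsupp.add_apply, pow_add,
      factorization_def (c * Lk k) hp]
    exact mul_dvd_mul (ordProj_dvd a p) (dvd_mul_right _ _)
  have hqT : ∀ q, q.Prime → p ∣ q - 1 → ¬ q ∣ a * T → ¬ q ∣ a * c * Lk k := by
    intro q hq hpq hqaT hqacL
    have hqa : ¬ q ∣ a := fun h => hqaT (h.mul_right T)
    rw [mul_assoc] at hqacL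
    have hqcL := (hq.dvd_mul.1 hqacL).resolve_left hqa
    exact hqaT <| ((dvd_prod_of_mem _ <| mem_filter.2
      ⟨mem_divisors.2 ⟨hqcL, hcL⟩, hq, hqa, hpq⟩).mul_left _).mul_left a
  set P := ((range (k + 1)).lcm fun i => b + a * n + a * c * i).primeFactors ∪
    ((range (k + 1)).lcm fun i => b + a * n + a * T + a * c * i).primeFactors
  have hx : b + a * n ≠ 0 := (Nat.add_pos_right _ (Nat.mul_pos ha hn)).ne'
  rw [gkphi_eq_add_mul, gkphi_eq_add_mul, show b + a * (n + T) = b + a * n + a * T by ring,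
    padicValRat_prod_totient_div_totient_lcm (P := P) (fun i _ => by omega) subset_union_right,
    padicValRat_prod_totient_div_totient_lcm (P := P) (fun i _ => by omega) subset_union_left]
  refine sum_congr rfl fun q hq => lcmDefect_totient_progression_shift ?_ hx
    (mul_ne_zero (by omega) (by omega)) hpT fun _ => hqT q ?_
  all_goals exact (mem_union.1 hq).elim prime_of_mem_primeFactors prime_of_mem_primeFactors

/-- For any prime `p`, the positive integer
`p ^ v_p (c L_k) ⬝ ∏_{q prime, q ∣ c L_k, q ∤ a, p ∣ q − 1} q`
is a period of `g_{p,k,φ} (n) = v_p (g_{k,φ} (n))`. -/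
theorem period_of_local_gkphi (k a b c : ℕ)
    (hk : 1 ≤ k) (ha : 1 ≤ a) (hc : 1 ≤ c)
    (p : ℕ) (hp : p.Prime) :
    ∀ n : ℕ, 0 < n →
      padicValRat p (gkphi k a b c
        (n + p ^ padicValNat p (c * Lk k) *
          ∏ q ∈ (c * Lk k).divisors.filter
            (fun q => q.Prime ∧ ¬ q ∣ a ∧ p ∣ (q - 1)), q)) =
      padicValRat p (gkphi k a b c n) :=
  period_of_local_gkphi_general k a b c ha hc p hp
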